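/- arXiv:1710.09143 — 2 statements merged into one kernel-verified Lean document; each statement's English description precedes it below -/
import Mathlib

section
/- Let k ≥ 2, and let f : [n]^{k−1} × [N] → {0,1} be a graph function with base function A = Base(f). Then for every natural number b, D_k(f) ≥ min { D^h_{k−1,b}(A) − (k−1)·N , b }. -/
/-- Transcript of `c` bits, each bit determined from the previous transcript. -/
def buildTranscript (step : List Bool → Bool) : ℕ → List Bool
  | 0 => []
  | m + 1 => buildTranscript step m ++ [step (buildTranscript step m)]

/-- A deterministic number-on-the-forehead style protocol with `k` players on input
space `I`, where `Vis i x x'` means player `i` cannot distinguish the inputs `x` and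
`x'` (player `i` sees everything except their own input).  The protocol runs for
exactly `c` rounds; in each round a speaker, determined by the transcript so far,
writes one bit on the blackboard, and this bit may depend only on the part of the
input that the speaker sees.  The output is determined by the full transcript. -/
structure DProt (k : ℕ) (I : Type) (Vis : Fin k → I → I → Prop) (Y : Type) (c : ℕ) where
  speaker : List Bool → Fin k
  msg : List Bool → I → Bool
  msg_nof : ∀ t x x', Vis (speaker t) x x' → msg t x = msg t x'
  out : List Bool → Y

def DProt.run {k I Vis Y c} (P : DProt k I Vis Y c) (x : I) : Y :=
  P.out (buildTranscript (fun t => P.msg t x) c)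

/-- Deterministic NOF communication complexity of `f` restricted to `S`. -/
noncomputable def DCC {k : ℕ} {I Y : Type} (Vis : Fin k → I → I → Prop)
    (f : I → Y) (S : Set I) : ℕ :=
  sInf { c | ∃ P : DProt k I Vis Y c, ∀ x ∈ S, P.run x = f x }

/-- A nondeterministic protocol: a prover first provides a proof string of `a` bits,
after which the players communicate `c` bits as in a deterministic protocol (the bits
may depend on the proof). -/
structure NProt (k : ℕ) (I : Type) (Vis : Fin k → I → I → Prop) (Y : Type) (a c : ℕ) where
  speaker : (Fin a → Bool) → List Bool → Fin k
  msg : (Fin a → Bool) → List Bool → I → Bool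
  msg_nof : ∀ p t x x', Vis (speaker p t) x x' → msg p t x = msg p t x'
  out : (Fin a → Bool) → List Bool → Y

def NProt.run {k I Vis Y a c} (P : NProt k I Vis Y a c) (p : Fin a → Bool) (x : I) : Y :=
  P.out p (buildTranscript (fun t => P.msg p t x) c)

/-- Nondeterministic NOF complexity `N_k(A, S)` of the search problem for `A : I → Y`
restricted to `S`: minimum cost (proof length plus communication) of a protocol which
on every input outputs either a value in `Y` or `none` (i.e. "don't know"), never
outputs a wrong value on inputs in `S`, and on every input of `S` has at least one
proof leading to the correct value. -/
noncomputable def NCC {k : ℕ} {I Y : Type} (Vis : Fin k → I → I → Prop)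
    (A : I → Y) (S : Set I) : ℕ :=
  sInf { m | ∃ a c, m = a + c ∧ ∃ P : NProt k I Vis (Option Y) a c,
    ∀ x ∈ S, (∀ p, P.run p x = none ∨ P.run p x = some (A x)) ∧
      ∃ p, P.run p x = some (A x) }

/-- Nondeterministic NOF complexity `N¹_k(f)` of a boolean function `f`: on every
1-input some proof leads to output `true`, and on every 0-input all proofs lead to
output `false`.  The cost is proof length plus communication. -/
noncomputable def NCCbool {k : ℕ} {I : Type} (Vis : Fin k → I → I → Prop)
    (f : I → Bool) : ℕ :=
  sInf { m | ∃ a c, m = a + c ∧ ∃ P : NProt k I Vis Bool a c,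
    ∀ x, f x = true ↔ ∃ p, P.run p x = true }

/-- Deterministic NOF communication complexity with `b` help bits:
`min` over `t ≤ b` and partitions of the input space into `2 ^ t` parts (given by a
coloring `H`) of `t` plus the maximal complexity of a part. -/
noncomputable def DHelp {k : ℕ} {I Y : Type} (Vis : Fin k → I → I → Prop)
    (A : I → Y) (b : ℕ) : ℕ :=
  sInf { m | ∃ t ≤ b, ∃ H : I → Fin (2 ^ t),
    m = t + Finset.univ.sup fun i => DCC Vis A (H ⁻¹' {i}) }

/-- Nondeterministic NOF communication complexity with `b` help bits. -/
noncomputable def NHelp {k : ℕ} {I Y : Type} (Vis : Fin k → I → I → Prop)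
    (A : I → Y) (b : ℕ) : ℕ :=
  sInf { m | ∃ t ≤ b, ∃ H : I → Fin (2 ^ t),
    m = t + Finset.univ.sup fun i => NCC Vis A (H ⁻¹' {i}) }

/-- A one-way protocol: player `last` first sends a message of `a` bits (depending
only on what they see), after which the remaining players communicate `c` more bits
without the participation of player `last`. -/
structure OWProt (k : ℕ) (I : Type) (Vis : Fin k → I → I → Prop) (Y : Type)
    (last : Fin k) (a c : ℕ) where
  pre : I → Fin a → Bool
  pre_nof : ∀ x x', Vis last x x' → pre x = pre x'
  speaker : (Fin a → Bool) → List Bool → Fin k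
  speaker_ne : ∀ p t, speaker p t ≠ last
  msg : (Fin a → Bool) → List Bool → I → Bool
  msg_nof : ∀ p t x x', Vis (speaker p t) x x' → msg p t x = msg p t x'
  out : (Fin a → Bool) → List Bool → Y

def OWProt.run {k I Vis Y last a c} (P : OWProt k I Vis Y last a c) (x : I) : Y :=
  P.out (P.pre x) (buildTranscript (fun t => P.msg (P.pre x) t x) c)

/-- One-way NOF communication complexity `D¹_k(f)`, where player `last` speaks first
(a single message) and then the other players communicate. -/
noncomputable def OWCC {k : ℕ} {I Y : Type} (Vis : Fin k → I → I → Prop)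
    (f : I → Y) (last : Fin k) : ℕ :=
  sInf { m | ∃ a c, m = a + c ∧ ∃ P : OWProt k I Vis Y last a c, ∀ x, P.run x = f x }

/-- Standard NOF visibility: player `i` sees all coordinates except the `i`-th one. -/
def nofVis (k : ℕ) (W : Type) : Fin k → (Fin k → W) → (Fin k → W) → Prop :=
  fun i x x' => ∀ j, j ≠ i → x j = x' j

/-- NOF visibility for `k` players on inputs in `(Fin (k-1) → W) × Z`: players
`0, …, k-2` hold the coordinates of the first component on their foreheads, and the
`k`-th player (index `k-1`) holds the second component. -/
def liftVis (k : ℕ) (W Z : Type) :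
    Fin k → ((Fin (k - 1) → W) × Z) → ((Fin (k - 1) → W) × Z) → Prop :=
  fun i z z' => (∀ j : Fin (k - 1), (j : ℕ) ≠ (i : ℕ) → z.1 j = z'.1 j) ∧
    ((i : ℕ) = k - 1 ∨ z.2 = z'.2)

/-- `C` is a cylinder in coordinate `i`: membership does not depend on coordinate `i`. -/
def IsCylinder (k : ℕ) (W : Type) (i : Fin k) (C : Set (Fin k → W)) : Prop :=
  ∀ x x', (∀ j, j ≠ i → x j = x' j) → (x ∈ C ↔ x' ∈ C)

/-- `C` is a cylinder intersection: an intersection of cylinders, one per coordinate. -/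
def IsCylinderIntersection (k : ℕ) (W : Type) (C : Set (Fin k → W)) : Prop :=
  ∃ Cs : Fin k → Set (Fin k → W), (∀ i, IsCylinder k W i (Cs i)) ∧ C = ⋂ i, Cs i

/-- `disc(A, S, y) = | |A⁻¹(y) ∩ S| - |S| / N | / |X|` where `N` is the number of
colors and `X` is the input space. -/
noncomputable def discVal (k : ℕ) (W Y : Type) (A : (Fin k → W) → Y)
    (S : Set (Fin k → W)) (y : Y) : ℝ :=
  |(Nat.card ↥(A ⁻¹' {y} ∩ S) : ℝ) - (Nat.card ↥S : ℝ) / (Nat.card Y : ℝ)| /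
    (Nat.card (Fin k → W) : ℝ)

/-- Multicolor discrepancy of `A`: the supremum of `disc(A, S, y)` over all cylinder
intersections `S` and all colors `y`. -/
noncomputable def multiDisc (k : ℕ) (W Y : Type) (A : (Fin k → W) → Y) : ℝ :=
  sSup { d : ℝ | ∃ S y, IsCylinderIntersection k W S ∧ d = discVal k W Y A S y }


/-! ### Auxiliary lemmas about transcripts -/

theorem bt_length (step : List Bool → Bool) (c : ℕ) :
    (buildTranscript step c).length = c := by
  induction c with
  | zero => rfl
  | succ m ih => simp [buildTranscript, ih]

theorem bt_take (step : List Bool → Bool) {m c : ℕ} (h : m ≤ c) :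
    (buildTranscript step c).take m = buildTranscript step m := by
  induction c with
  | zero => interval_cases m; rfl
  | succ c ih =>
    rcases Nat.lt_or_ge m (c+1) with h' | h'
    · have hm : m ≤ c := by omega
      rw [show buildTranscript step (c+1)
            = buildTranscript step c ++ [step (buildTranscript step c)] from rfl,
        List.take_append_of_le_length (by rw [bt_length]; exact hm), ih hm]
    · have : m = c + 1 := by omega
      subst this
      exact List.take_of_length_le (by rw [bt_length])

theorem bt_getD (step : List Bool → Bool) {m c : ℕ} (h : m < c) :
    (buildTranscript step c).getD m false = step (buildTranscript step m) := by
  have h1 : (buildTranscript step (m+1)).getD m false = step (buildTranscript step m) := by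
    rw [show buildTranscript step (m+1)
          = buildTranscript step m ++ [step (buildTranscript step m)] from rfl]
    rw [List.getD_eq_getElem?_getD, List.getElem?_append_right (by rw [bt_length])]
    simp [bt_length]
  rw [← h1, ← bt_take step (show m+1 ≤ c from h)]
  rw [List.getD_eq_getElem?_getD, List.getD_eq_getElem?_getD, List.getElem?_take]
  simp

theorem bt_eq_of (step : List Bool → Bool) (τ : List Bool) {c : ℕ} (hlen : τ.length = c)
    (h : ∀ m, m < c → step (τ.take m) = τ.getD m false) : buildTranscript step c = τ := by
  have aux : ∀ m, m ≤ c → buildTranscript step m = τ.take m := by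
    intro m hm
    induction m with
    | zero => simp [buildTranscript]
    | succ p ih =>
      have hp : p < c := by omega
      rw [show buildTranscript step (p+1)
            = buildTranscript step p ++ [step (buildTranscript step p)] from rfl,
        ih (by omega), h p hp, List.take_succ]
      congr 1
      rw [List.getElem?_eq_getElem (by omega), List.getD_eq_getElem _ _ (by omega)]
      rfl
  rw [aux c le_rfl, List.take_of_length_le (by omega)]

theorem ofFn_getD (l : List Bool) {c : ℕ} (h : l.length = c) :
    List.ofFn (fun m : Fin c => l.getD (↑m) false) = l := by
  apply List.ext_getElem
  · simp [h]
  · intro i h1 h2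
    simp only [List.getElem_ofFn]
    rw [List.getD_eq_getElem _ _ (by omega)]

/-! ### A trivial protocol computing a graph function -/

def trivProt (k n N : ℕ) (hk : 2 ≤ k) (A : (Fin (k - 1) → Fin n) → Fin N) :
    DProt k ((Fin (k - 1) → Fin n) × Fin N) (liftVis k (Fin n) (Fin N)) Bool (N + 1) where
  speaker t := if t.length < N then ⟨k - 1, by omega⟩ else ⟨0, by omega⟩
  msg t z := if h : t.length < N then decide (A z.1 = ⟨t.length, h⟩) else t.getD (z.2 : ℕ) false
  msg_nof := by
    intro t x x' hvis
    by_cases h : t.length < N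
    · simp only [if_pos h, liftVis] at hvis
      have h1 : x.1 = x'.1 := funext fun j => hvis.1 j (Nat.ne_of_lt j.isLt)
      simp only [dif_pos h, h1]
    · simp only [if_neg h, liftVis] at hvis
      have h2 : x.2 = x'.2 := by
        rcases hvis.2 with h' | h'
        · exact absurd h' (by omega)
        · exact h'
      simp only [dif_neg h, h2]
  out t := t.getD N false

theorem trivProt_run (k n N : ℕ) (hk : 2 ≤ k)
    (f : (Fin (k - 1) → Fin n) × Fin N → Bool)
    (A : (Fin (k - 1) → Fin n) → Fin N)
    (hf : ∀ x y, f (x, y) = true ↔ A x = y)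
    (z : (Fin (k - 1) → Fin n) × Fin N) :
    (trivProt k n N hk A).run z = f z := by
  obtain ⟨x, y⟩ := z
  have hrun : (trivProt k n N hk A).run (x, y) = decide (A x = y) := by
    unfold DProt.run
    set step := fun t => (trivProt k n N hk A).msg t (x, y) with hstep
    show (buildTranscript step (N+1)).getD N false = decide (A x = y)
    rw [bt_getD step (Nat.lt_succ_self N)]
    show (if h : (buildTranscript step N).length < N
        then decide (A x = ⟨(buildTranscript step N).length, h⟩)
        else (buildTranscript step N).getD (↑y) false) = decide (A x = y)
    rw [dif_neg (by rw [bt_length]; omega)]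
    rw [bt_getD step y.isLt]
    show (if h : (buildTranscript step (↑y)).length < N
        then decide (A x = ⟨(buildTranscript step (↑y)).length, h⟩)
        else (buildTranscript step (↑y)).getD (↑y) false) = decide (A x = y)
    rw [dif_pos (by rw [bt_length]; exact y.isLt)]
    have : (⟨(buildTranscript step (↑y)).length, by rw [bt_length]; exact y.isLt⟩ : Fin N) = y :=
      Fin.ext (bt_length _ _)
    rw [this]
  by_cases hA : A x = y
  · rw [hrun, (hf x y).mpr hA, decide_eq_true hA]
  · have h1 : f (x, y) = false := by
      cases hfv : f (x, y) with
      | false => rfl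
      | true => exact absurd ((hf x y).mp hfv) hA
    rw [hrun, h1, decide_eq_false hA]

/-! ### The part protocol extracted from a protocol for the graph function -/

def qmsg (k n N c : ℕ)
    (P : DProt k ((Fin (k - 1) → Fin n) × Fin N) (liftVis k (Fin n) (Fin N)) Bool c)
    (τ : List Bool) (r : ℕ) (x : Fin (k - 1) → Fin n) : Bool :=
  if hy : r / (k - 1) < N then
    decide (∀ m, m < c → (P.speaker (τ.take m) : ℕ) = r % (k - 1) →
      P.msg (τ.take m) (x, ⟨r / (k - 1), hy⟩) = τ.getD m false)
  else true

theorem qmsg_nof (k n N c : ℕ)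
    (P : DProt k ((Fin (k - 1) → Fin n) × Fin N) (liftVis k (Fin n) (Fin N)) Bool c)
    (τ : List Bool) (r : ℕ) (x x' : Fin (k - 1) → Fin n)
    (hvis : ∀ j : Fin (k - 1), (j : ℕ) ≠ r % (k - 1) → x j = x' j) :
    qmsg k n N c P τ r x = qmsg k n N c P τ r x' := by
  unfold qmsg
  by_cases hy : r / (k - 1) < N
  · rw [dif_pos hy, dif_pos hy]
    apply decide_eq_decide.mpr
    have key : ∀ (y : Fin N) m, (P.speaker (τ.take m) : ℕ) = r % (k - 1) →
        P.msg (τ.take m) (x, y) = P.msg (τ.take m) (x', y) := by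
      intro y m hsp
      apply P.msg_nof
      exact ⟨fun j hj => hvis j (by rw [← hsp]; exact hj), Or.inr rfl⟩
    constructor
    · intro h m hm hsp; rw [← key _ m hsp]; exact h m hm hsp
    · intro h m hm hsp; rw [key _ m hsp]; exact h m hm hsp
  · rw [dif_neg hy, dif_neg hy]

theorem qmsg_block (k n N c : ℕ) (hk : 2 ≤ k)
    (P : DProt k ((Fin (k - 1) → Fin n) × Fin N) (liftVis k (Fin n) (Fin N)) Bool c)
    (τ : List Bool) (y : Fin N) (i : ℕ) (hi : i < k - 1) (x : Fin (k - 1) → Fin n) :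
    qmsg k n N c P τ ((k - 1) * (y : ℕ) + i) x =
      decide (∀ m, m < c → (P.speaker (τ.take m) : ℕ) = i →
        P.msg (τ.take m) (x, y) = τ.getD m false) := by
  have hd : ((k - 1) * (y : ℕ) + i) / (k - 1) = (y : ℕ) := by
    rw [Nat.mul_add_div (by omega)]
    simp [Nat.div_eq_of_lt hi]
  have hm : ((k - 1) * (y : ℕ) + i) % (k - 1) = i := by
    rw [Nat.mul_add_mod]
    exact Nat.mod_eq_of_lt hi
  unfold qmsg
  simp only [hd, hm]
  rw [dif_pos y.isLt]

noncomputable def partProt (k n N c : ℕ) (hk : 2 ≤ k) (hN : 0 < N)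
    (P : DProt k ((Fin (k - 1) → Fin n) × Fin N) (liftVis k (Fin n) (Fin N)) Bool c)
    (τ : List Bool) :
    DProt (k - 1) (Fin (k - 1) → Fin n) (nofVis (k - 1) (Fin n)) (Fin N) ((k - 1) * N) where
  speaker t := ⟨t.length % (k - 1), Nat.mod_lt _ (by omega)⟩
  msg t x := qmsg k n N c P τ t.length x
  msg_nof := by
    intro t x x' hvis
    exact qmsg_nof k n N c P τ t.length x x'
      (fun j hj => hvis j (fun he => hj (by rw [he])))
  out t :=
    if h : ∃ y : Fin N, ∀ i, i < k - 1 → t.getD ((k - 1) * (y : ℕ) + i) false = true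
    then h.choose else ⟨0, hN⟩

theorem partProt_run (k n N c : ℕ) (hk : 2 ≤ k) (hN : 0 < N)
    (f : (Fin (k - 1) → Fin n) × Fin N → Bool)
    (A : (Fin (k - 1) → Fin n) → Fin N)
    (hf : ∀ x y, f (x, y) = true ↔ A x = y)
    (P : DProt k ((Fin (k - 1) → Fin n) × Fin N) (liftVis k (Fin n) (Fin N)) Bool c)
    (hP : ∀ z, P.run z = f z)
    (x : Fin (k - 1) → Fin n) (τ : List Bool)
    (hτ : τ = buildTranscript (fun t => P.msg t (x, A x)) c) :
    (partProt k n N c hk hN P τ).run x = A x := by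
  set Q := partProt k n N c hk hN P τ with hQ
  set T := buildTranscript (fun t => Q.msg t x) ((k - 1) * N) with hT
  have hlenτ : τ.length = c := by rw [hτ]; exact bt_length _ _
  have hTget : ∀ r, r < (k - 1) * N → T.getD r false = qmsg k n N c P τ r x := by
    intro r hr
    rw [hT, bt_getD _ hr]
    show qmsg k n N c P τ (buildTranscript (fun t => Q.msg t x) r).length x = _
    rw [bt_length]
  have harith : ∀ (y : Fin N) i, i < k - 1 → (k - 1) * (y : ℕ) + i < (k - 1) * N := by
    intro y i hi
    have hy : (y : ℕ) + 1 ≤ N := y.isLt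
    calc (k - 1) * (y : ℕ) + i < (k - 1) * (y : ℕ) + (k - 1) := by omega
    _ = (k - 1) * ((y : ℕ) + 1) := by ring
    _ ≤ (k - 1) * N := Nat.mul_le_mul_left _ hy
  have hclaimA : ∀ i, i < k - 1 → T.getD ((k - 1) * ((A x) : ℕ) + i) false = true := by
    intro i hi
    rw [hTget _ (harith _ _ hi), qmsg_block k n N c hk P τ (A x) i hi]
    apply decide_eq_true
    intro m hm _
    rw [hτ, bt_take _ (le_of_lt hm), bt_getD _ hm]
  have hclaimB : ∀ y : Fin N,
      (∀ i, i < k - 1 → T.getD ((k - 1) * (y : ℕ) + i) false = true) → y = A x := by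
    intro y hy
    have hall : ∀ m, m < c → P.msg (τ.take m) (x, y) = τ.getD m false := by
      intro m hm
      by_cases hsp : (P.speaker (τ.take m) : ℕ) = k - 1
      · have h1 : P.msg (τ.take m) (x, y) = P.msg (τ.take m) (x, A x) :=
          P.msg_nof _ _ _ ⟨fun j _ => rfl, Or.inl hsp⟩
        rw [h1, hτ, bt_take _ (le_of_lt hm), bt_getD _ hm]
      · have hlt : (P.speaker (τ.take m) : ℕ) < k - 1 := by
          have := (P.speaker (τ.take m)).isLt; omega
        have hb := hy _ hlt
        rw [hTget _ (harith _ _ hlt), qmsg_block k n N c hk P τ y _ hlt] at hb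
        exact of_decide_eq_true hb m hm rfl
    have heq : buildTranscript (fun t => P.msg t (x, y)) c = τ := bt_eq_of _ τ hlenτ hall
    have hout : P.run (x, y) = P.run (x, A x) := by
      unfold DProt.run
      rw [heq, hτ]
    have hfy : f (x, y) = true := by
      rw [← hP, hout, hP, (hf x (A x)).mpr rfl]
    exact ((hf x y).mp hfy).symm
  have hex : ∃ y : Fin N, ∀ i, i < k - 1 → T.getD ((k - 1) * (y : ℕ) + i) false = true :=
    ⟨A x, hclaimA⟩
  show Q.out T = A x
  show (if h : ∃ y : Fin N, ∀ i, i < k - 1 → T.getD ((k - 1) * (y : ℕ) + i) false = true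
      then h.choose else ⟨0, hN⟩) = A x
  rw [dif_pos hex]
  exact hclaimB _ hex.choose_spec


/-- Let `k ≥ 2` and let `f : [n]^{k-1} × [N] → {0,1}` be a graph
function with base function `A = Base f`.  Then for every natural number `b`,
`D_k(f) ≥ min { D^h_{k-1,b}(A) - (k-1)·N , b }`. -/
theorem graph_fn_lower_bound_det_help (k n N b : ℕ) (hk : 2 ≤ k)
    (f : (Fin (k - 1) → Fin n) × Fin N → Bool)
    (A : (Fin (k - 1) → Fin n) → Fin N)
    (hf : ∀ x y, f (x, y) = true ↔ A x = y) :
    (DCC (liftVis k (Fin n) (Fin N)) f Set.univ : ℤ) ≥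
      min ((DHelp (nofVis (k - 1) (Fin n)) A b : ℤ) - ((k : ℤ) - 1) * (N : ℤ))
        (b : ℤ) := by
  rw [ge_iff_le]
  set c := DCC (liftVis k (Fin n) (Fin N)) f Set.univ with hc
  rcases le_or_gt (b : ℤ) (c : ℤ) with hb | hb
  · exact le_trans (min_le_right _ _) hb
  · have hcb : c < b := by exact_mod_cast hb
    have key : DHelp (nofVis (k - 1) (Fin n)) A b ≤ c + (k - 1) * N := by
      rcases Nat.eq_zero_or_pos N with hN0 | hN
      · subst hN0
        have hD : ∀ (S : Set (Fin (k - 1) → Fin n)),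
            DCC (nofVis (k - 1) (Fin n)) A S = 0 := by
          intro S
          have hemp : {c' : ℕ | ∃ P : DProt (k - 1) (Fin (k - 1) → Fin n)
              (nofVis (k - 1) (Fin n)) (Fin 0) c', ∀ x ∈ S, P.run x = A x} = ∅ := by
            apply Set.eq_empty_iff_forall_notMem.mpr
            rintro m ⟨P, -⟩
            exact (P.out []).elim0
          show sInf _ = 0
          rw [hemp, Nat.sInf_empty]
        have hmem0 : (0 : ℕ) ∈ {m | ∃ t ≤ b, ∃ H : (Fin (k - 1) → Fin n) → Fin (2 ^ t),
            m = t + Finset.univ.sup fun i => DCC (nofVis (k - 1) (Fin n)) A (H ⁻¹' {i})} := by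
          refine ⟨0, Nat.zero_le b, fun _ => ⟨0, by norm_num⟩, ?_⟩
          simp [hD]
        exact le_trans (Nat.sInf_le hmem0) (Nat.zero_le _)
      · have hmem : c ∈ {c' : ℕ | ∃ P : DProt k ((Fin (k - 1) → Fin n) × Fin N)
            (liftVis k (Fin n) (Fin N)) Bool c', ∀ x ∈ Set.univ, P.run x = f x} := by
          rw [hc]
          exact Nat.sInf_mem ⟨N + 1, trivProt k n N hk A,
            fun z _ => trivProt_run k n N hk f A hf z⟩
        obtain ⟨P, hP⟩ := hmem
        let e : (Fin c → Bool) ≃ Fin (2 ^ c) :=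
          (Equiv.arrowCongr (Equiv.refl (Fin c)) finTwoEquiv.symm).trans finFunctionFinEquiv
        let btx : (Fin (k - 1) → Fin n) → List Bool :=
          fun x => buildTranscript (fun t => P.msg t (x, A x)) c
        let H : (Fin (k - 1) → Fin n) → Fin (2 ^ c) :=
          fun x => e (fun m => (btx x).getD (↑m) false)
        have hpart : ∀ i : Fin (2 ^ c),
            DCC (nofVis (k - 1) (Fin n)) A (H ⁻¹' {i}) ≤ (k - 1) * N := by
          intro i
          apply Nat.sInf_le
          refine ⟨partProt k n N c hk hN P (List.ofFn fun m : Fin c => e.symm i m), ?_⟩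
          intro x hx
          apply partProt_run k n N c hk hN f A hf P (fun z => hP z (Set.mem_univ z)) x
          have hx' : H x = i := hx
          have hsym : e.symm i = fun m : Fin c => (btx x).getD (↑m) false := by
            rw [← hx']; exact e.symm_apply_apply _
          simp only [hsym]
          exact ofFn_getD (btx x) (bt_length _ _)
        have hmem2 : c + (Finset.univ.sup fun i => DCC (nofVis (k - 1) (Fin n)) A (H ⁻¹' {i}))
            ∈ {m | ∃ t ≤ b, ∃ H : (Fin (k - 1) → Fin n) → Fin (2 ^ t),
              m = t + Finset.univ.sup fun i => DCC (nofVis (k - 1) (Fin n)) A (H ⁻¹' {i})} :=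
          ⟨c, le_of_lt hcb, H, rfl⟩
        refine le_trans (Nat.sInf_le hmem2) ?_
        exact Nat.add_le_add_left (Finset.sup_le fun i _ => hpart i) c
    refine le_trans (min_le_left _ _) ?_
    have hcast : ((k : ℤ) - 1) = ((k - 1 : ℕ) : ℤ) := by
      have h1 : 1 ≤ k := by omega
      push_cast [Nat.cast_sub h1]
      ring
    rw [hcast]
    have hkey : (DHelp (nofVis (k - 1) (Fin n)) A b : ℤ) ≤ (c : ℤ) + ((k - 1 : ℕ) : ℤ) * N := by
      exact_mod_cast key
    linarith
end

section
/- Let A : [n]^k → [N] be a function and S ⊆ [n]^k. Then D_k(A,S) ≤ (k−1)·2^{N_k(A,S)} + N_k(A,S). -/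
/-!
A certificate for a nondeterministic protocol with `a` proof bits and `c` communication bits is
a proof together with a claimed transcript; there are `2 ^ (a + c)` of them. Deterministically,
each of the players `0, …, k - 2` first announces, for every certificate, whether the bits it
attributes to that player are the ones the player would write. The last player then writes down
(with `a + c` bits) a certificate accepted by all these announcements, consistent with its own
view, and with an output other than "don't know". A certificate consistent with every player is
the genuine run of the protocol on its proof, so by soundness its output is correct; the honest
proof of completeness shows that such a certificate exists.
-/

theorem length_buildTranscript (step : List Bool → Bool) :
    ∀ m, (buildTranscript step m).length = m
  | 0 => rfl
  | m + 1 => by simp [buildTranscript, length_buildTranscript step m]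

theorem take_buildTranscript (step : List Bool → Bool) {j m : ℕ} (h : j ≤ m) :
    (buildTranscript step m).take j = buildTranscript step j := by
  induction m, h using Nat.le_induction with
  | base => exact List.take_of_length_le (length_buildTranscript step j).le
  | succ m hjm ih =>
    rw [buildTranscript, List.take_append_of_le_length (by rwa [length_buildTranscript]), ih]

theorem getD_buildTranscript (step : List Bool → Bool) {j m : ℕ} (h : j < m) :
    (buildTranscript step m).getD j false = step (buildTranscript step j) := by
  induction m, h using Nat.le_induction with
  | base => simp [buildTranscript, length_buildTranscript]
  | succ m hjm ih =>
    rwa [buildTranscript, List.getD_append _ _ _ _ (by rw [length_buildTranscript]; omega)]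

theorem eq_buildTranscript_iff (step : List Bool → Bool) (l : List Bool) :
    l = buildTranscript step l.length ↔ ∀ j < l.length, l.getD j false = step (l.take j) := by
  refine ⟨fun hl j hj => ?_, fun h => ?_⟩
  · rw [hl, getD_buildTranscript step hj, take_buildTranscript step hj.le]
  · suffices ∀ m ≤ l.length, l.take m = buildTranscript step m by
      simpa using this l.length le_rfl
    intro m hm
    induction m with
    | zero => rfl
    | succ m ih =>
      rw [List.take_add_one, ih (by omega), buildTranscript, ← ih (by omega), ← h m (by omega),
        List.getD_eq_getElem?_getD, List.getElem?_eq_getElem (by omega)]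
      rfl

theorem drop_buildTranscript (step : List Bool → Bool) (m n : ℕ) :
    (buildTranscript step (m + n)).drop m =
      buildTranscript (fun u => step (buildTranscript step m ++ u)) n := by
  induction n with
  | zero => simp [buildTranscript, length_buildTranscript]
  | succ n ih =>
    have hsplit : buildTranscript step (m + n) = buildTranscript step m ++
        buildTranscript (fun u => step (buildTranscript step m ++ u)) n := by
      rw [← ih, ← take_buildTranscript step (Nat.le_add_right m n), List.take_append_drop]
    rw [← add_assoc, buildTranscript, List.drop_append_of_le_length
      (by simp [length_buildTranscript]), ih, buildTranscript, hsplit]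

theorem buildTranscript_getD_length {l : List Bool} {n : ℕ} (h : l.length = n) :
    buildTranscript (fun u => l.getD u.length false) n = l := by
  subst h
  exact ((eq_buildTranscript_iff _ l).2 fun j hj => by simp [hj.le]).symm

def DProt.toNProt {k : ℕ} {I Y : Type} {Vis : Fin k → I → I → Prop} {c : ℕ}
    (P : DProt k I Vis Y c) : NProt k I Vis (Option Y) 0 c where
  speaker _ := P.speaker
  msg _ := P.msg
  msg_nof _ := P.msg_nof
  out _ t := some (P.out t)

namespace NProt

variable {a c : ℕ}

/-- A proof string together with a claimed transcript of the communication. -/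
abbrev Cert (a c : ℕ) : Type := (Fin a → Bool) × (Fin c → Bool)

section

variable {k : ℕ} {I Y : Type} {Vis : Fin k → I → I → Prop}

def ConsistentFor (P : NProt k I Vis Y a c) (i : Fin k) (s : Cert a c) (x : I) : Prop :=
  ∀ j : Fin c, P.speaker s.1 ((List.ofFn s.2).take j) = i →
    s.2 j = P.msg s.1 ((List.ofFn s.2).take j) x

instance (P : NProt k I Vis Y a c) (i : Fin k) (s : Cert a c) (x : I) :
    Decidable (P.ConsistentFor i s x) := by
  unfold ConsistentFor; infer_instance

theorem consistentFor_congr (P : NProt k I Vis Y a c) {i : Fin k} (s : Cert a c) {x x' : I}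
    (h : Vis i x x') : P.ConsistentFor i s x ↔ P.ConsistentFor i s x' := by
  refine forall_congr' fun j => imp_congr_right fun hj => ?_
  rw [P.msg_nof _ _ x x' (hj ▸ h)]

theorem forall_consistentFor_iff (P : NProt k I Vis Y a c) (s : Cert a c) (x : I) :
    (∀ i, P.ConsistentFor i s x) ↔
      List.ofFn s.2 = buildTranscript (fun t => P.msg s.1 t x) c := by
  have h := eq_buildTranscript_iff (fun t => P.msg s.1 t x) (List.ofFn s.2)
  rw [List.length_ofFn] at h
  rw [h]
  refine ⟨fun hs j hj => ?_, fun hs i j _ => ?_⟩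
  · simpa [hj] using hs _ ⟨j, hj⟩ rfl
  · simpa using hs j j.2

theorem exists_forall_consistentFor (P : NProt k I Vis Y a c) (p : Fin a → Bool) (x : I) :
    ∃ τ, ∀ i, P.ConsistentFor i (p, τ) x := by
  set l := buildTranscript (fun t => P.msg p t x) c
  refine ⟨fun j => l.getD j false, (P.forall_consistentFor_iff _ x).2 ?_⟩
  apply List.ext_getElem <;> simp [l, length_buildTranscript]

theorem out_eq_run (P : NProt k I Vis Y a c) {s : Cert a c} {x : I}
    (h : ∀ i, P.ConsistentFor i s x) : P.out s.1 (List.ofFn s.2) = P.run s.1 x := by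
  rw [(P.forall_consistentFor_iff s x).1 h]; rfl

end

def Cert.bits (s : Cert a c) : List Bool := List.ofFn s.1 ++ List.ofFn s.2

def Cert.ofBits (l : List Bool) : Cert a c :=
  (fun i => l.getD i false, fun j => l.getD (a + j) false)

theorem Cert.length_bits (s : Cert a c) : (Cert.bits s).length = a + c := by
  simp [Cert.bits]

theorem Cert.ofBits_bits (s : Cert a c) : Cert.ofBits (Cert.bits s) = s := by
  ext i <;> simp [Cert.ofBits, Cert.bits, List.getElem?_append_left]

/-- The board entry in which player `i.castSucc` announces whether `s` is consistent with its
view. -/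
noncomputable def slot (k a c : ℕ) : Fin k × Cert a c ≃ Fin (k * 2 ^ (a + c)) :=
  Fintype.equivFinOfCardEq (by simp [pow_add])

section

variable {k : ℕ} {I Y : Type} {Vis : Fin (k + 1) → I → I → Prop}

def Accepted (P : NProt (k + 1) I Vis (Option Y) a c) (board : List Bool) (x : I)
    (s : Cert a c) : Prop :=
  (∀ i : Fin k, board.getD (slot k a c (i, s)) false = true) ∧
    P.ConsistentFor (Fin.last k) s x ∧ (P.out s.1 (List.ofFn s.2)).isSome

noncomputable def pick (P : NProt (k + 1) I Vis (Option Y) a c) (board : List Bool) (x : I) :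
    Cert a c :=
  Classical.epsilon (P.Accepted board x)

theorem pick_congr (P : NProt (k + 1) I Vis (Option Y) a c) (board : List Bool) {x x' : I}
    (h : Vis (Fin.last k) x x') : P.pick board x = P.pick board x' := by
  unfold pick Accepted
  simp only [P.consistentFor_congr _ h]

noncomputable def simMsg (P : NProt (k + 1) I Vis (Option Y) a c) (t : List Bool) (x : I) :
    Bool :=
  if h : t.length < k * 2 ^ (a + c) then
    decide (P.ConsistentFor ((slot k a c).symm ⟨t.length, h⟩).1.castSucc
      ((slot k a c).symm ⟨t.length, h⟩).2 x)
  else (Cert.bits (P.pick (t.take (k * 2 ^ (a + c))) x)).getD (t.length - k * 2 ^ (a + c)) false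

noncomputable def board (P : NProt (k + 1) I Vis (Option Y) a c) (x : I) : List Bool :=
  buildTranscript (fun t => P.simMsg t x) (k * 2 ^ (a + c))

noncomputable def toDProt (P : NProt (k + 1) I Vis (Option Y) a c) (y₀ : Y) :
    DProt (k + 1) I Vis Y (k * 2 ^ (a + c) + (a + c)) where
  speaker t :=
    if h : t.length < k * 2 ^ (a + c) then ((slot k a c).symm ⟨t.length, h⟩).1.castSucc
    else Fin.last k
  msg := P.simMsg
  msg_nof t x x' h := by
    unfold simMsg
    split_ifs with ht
    · simp only [ht, dif_pos] at h
      exact decide_eq_decide.2 (P.consistentFor_congr _ h)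
    · simp only [ht, dif_neg, not_false_eq_true] at h
      rw [P.pick_congr _ h]
  out t :=
    let σ : Cert a c := Cert.ofBits (t.drop (k * 2 ^ (a + c)))
    (P.out σ.1 (List.ofFn σ.2)).getD y₀

theorem simMsg_of_length_eq_slot (P : NProt (k + 1) I Vis (Option Y) a c) {t : List Bool}
    {i : Fin k} {s : Cert a c} (h : t.length = slot k a c (i, s)) (x : I) :
    P.simMsg t x = decide (P.ConsistentFor i.castSucc s x) := by
  have ht : t.length < k * 2 ^ (a + c) := h ▸ (slot k a c (i, s)).2
  have hslot : (slot k a c).symm ⟨t.length, ht⟩ = (i, s) :=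
    (Equiv.symm_apply_eq _).2 (Fin.ext h)
  rw [simMsg, dif_pos ht, hslot]

theorem simMsg_append (P : NProt (k + 1) I Vis (Option Y) a c) {t : List Bool}
    (ht : t.length = k * 2 ^ (a + c)) (u : List Bool) (x : I) :
    P.simMsg (t ++ u) x = (Cert.bits (P.pick t x)).getD u.length false := by
  rw [simMsg, dif_neg (by simp [ht]), List.take_left' ht]
  simp [ht]

theorem getD_slot_board (P : NProt (k + 1) I Vis (Option Y) a c) (x : I) (i : Fin k)
    (s : Cert a c) :
    (P.board x).getD (slot k a c (i, s)) false =
      decide (P.ConsistentFor i.castSucc s x) := by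
  rw [board, getD_buildTranscript _ (slot k a c (i, s)).2,
    P.simMsg_of_length_eq_slot (length_buildTranscript _ _)]

theorem run_toDProt (P : NProt (k + 1) I Vis (Option Y) a c) (y₀ : Y) (x : I) :
    (P.toDProt y₀).run x =
      (P.out (P.pick (P.board x) x).1 (List.ofFn (P.pick (P.board x) x).2)).getD y₀ := by
  simp only [DProt.run, toDProt, drop_buildTranscript,
    P.simMsg_append (length_buildTranscript _ _), buildTranscript_getD_length (Cert.length_bits _),
    Cert.ofBits_bits]
  rfl

theorem accepted_pick (P : NProt (k + 1) I Vis (Option Y) a c) {x : I} {p : Fin a → Bool}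
    (hp : (P.run p x).isSome) : P.Accepted (P.board x) x (P.pick (P.board x) x) := by
  obtain ⟨τ, hτ⟩ := P.exists_forall_consistentFor p x
  refine Classical.epsilon_spec ⟨(p, τ), fun i => ?_, hτ _, ?_⟩
  · rw [getD_slot_board]
    exact decide_eq_true (hτ _)
  · rwa [P.out_eq_run hτ]

theorem forall_consistentFor_of_accepted (P : NProt (k + 1) I Vis (Option Y) a c) {x : I}
    {s : Cert a c} (h : P.Accepted (P.board x) x s) : ∀ i, P.ConsistentFor i s x :=
  Fin.lastCases h.2.1 fun i => of_decide_eq_true (by rw [← getD_slot_board]; exact h.1 i)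

theorem run_toDProt_eq (P : NProt (k + 1) I Vis (Option Y) a c) (y₀ : Y) {A : I → Y} {x : I}
    (hsound : ∀ p, P.run p x = none ∨ P.run p x = some (A x))
    (hcomplete : ∃ p, P.run p x = some (A x)) :
    (P.toDProt y₀).run x = A x := by
  obtain ⟨p, hp⟩ := hcomplete
  have hacc := P.accepted_pick (show (P.run p x).isSome by simp [hp])
  have hsome := hacc.2.2
  rw [run_toDProt]
  rw [P.out_eq_run (P.forall_consistentFor_of_accepted hacc)] at hsome ⊢
  rcases hsound (P.pick (P.board x) x).1 with h | h
  · simp [h] at hsome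
  · rw [h, Option.getD_some]

end

end NProt

theorem DCC_le_sub_one_mul_two_pow_NCC_add {k : ℕ} {I Y : Type} (Vis : Fin k → I → I → Prop)
    (A : I → Y) (S : Set I) :
    DCC Vis A S ≤ (k - 1) * 2 ^ NCC Vis A S + NCC Vis A S := by
  obtain hD | ⟨c₀, P₀, hP₀⟩ :=
    Set.eq_empty_or_nonempty {c | ∃ P : DProt k I Vis Y c, ∀ x ∈ S, P.run x = A x}
  · simp [DCC, hD]
  obtain ⟨a, c, hac, P, hP⟩ := Nat.sInf_mem (s := {m | ∃ a c, m = a + c ∧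
      ∃ P : NProt k I Vis (Option Y) a c, ∀ x ∈ S,
        (∀ p, P.run p x = none ∨ P.run p x = some (A x)) ∧ ∃ p, P.run p x = some (A x)})
    ⟨_, 0, c₀, rfl, P₀.toNProt, fun x hx =>
      ⟨fun _ => .inr (congrArg some (hP₀ x hx)), default, congrArg some (hP₀ x hx)⟩⟩
  cases k with
  | zero => exact (P₀.speaker []).elim0
  | succ k =>
    rw [NCC, hac]
    exact Nat.sInf_le
      ⟨P.toDProt (P₀.out []), fun x hx => P.run_toDProt_eq _ (hP x hx).1 (hP x hx).2⟩

/-- Let `A : [n]^k → [N]` and `S ⊆ [n]^k`.  Then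
`D_k(A, S) ≤ (k - 1) · 2^{N_k(A,S)} + N_k(A,S)`. -/
theorem det_le_exp_nondet_partial (k n N : ℕ) (A : (Fin k → Fin n) → Fin N)
    (S : Set (Fin k → Fin n)) :
    DCC (nofVis k (Fin n)) A S ≤
      (k - 1) * 2 ^ NCC (nofVis k (Fin n)) A S + NCC (nofVis k (Fin n)) A S :=
  DCC_le_sub_one_mul_two_pow_NCC_add _ A S
end
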